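/- Let ζ₁,…,ζₙ be i.i.d. real random variables, S_i the random walk, σ = max{i ≤ n : S_i ≤ 0}. The four random variables N⁻ = Σ_{i=1}^σ 1{S_i ≤ 0}, Ñ⁺ = Σ_{i=0}^{σ−1} 1{S_i ≥ S_σ}, →F = max{i ≤ σ : S_i = min_{j≤σ} S_j}, and ←G = σ − min{i ≤ σ : S_i = max_{j≤σ} S_j} all have the same distribution. -/

import Mathlib

/-!
Condition on `σ = k`. The event `{σ = k}` sees the first `k` increments only through their sum
(`S_k ≤ 0` and `S_i > 0` for `k < i ≤ n`), so conditionally on it they are still exchangeable, and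
each of the four statistics is a function of them: `N⁻` and `→F` directly, `Ñ⁺` and `←G` as `N⁻`
and `→F` of the reversed increments, whose walk is `i ↦ S_k - S_{k-i}`. Reversal preserves an
exchangeable law, and `N⁻`, `→F` have the same law under it by a combinatorial lemma of
Sparre Andersen type: for every `y ∈ ℝᵏ`, `N⁻` and `→F` take each value equally often over the `k!`
rearrangements of `y`.
-/

open MeasureTheory ProbabilityTheory Finset
open scoped ENNReal

namespace Nat

theorem sSup_setOf_le_and_eq_iff {p : ℕ → Prop} {k m : ℕ} (h : ∃ i ≤ k, p i) :
    sSup {i | i ≤ k ∧ p i} = m ↔ m ≤ k ∧ p m ∧ ∀ j, m < j → j ≤ k → ¬ p j := by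
  have hne : {i | i ≤ k ∧ p i}.Nonempty := h
  have hbdd : BddAbove {i | i ≤ k ∧ p i} := ⟨k, fun i hi => hi.1⟩
  constructor
  · rintro rfl
    obtain ⟨hle, hp⟩ := Nat.sSup_mem hne hbdd
    exact ⟨hle, hp, fun j hj hjk hpj => (le_csSup hbdd ⟨hjk, hpj⟩).not_gt hj⟩
  · rintro ⟨hle, hp, hmax⟩
    refine IsGreatest.csSup_eq ⟨⟨hle, hp⟩, fun j ⟨hjk, hpj⟩ => ?_⟩
    by_contra! hj
    exact hmax j hj hjk hpj

theorem sInf_setOf_le_and_eq_iff {p : ℕ → Prop} {k m : ℕ} (h : ∃ i ≤ k, p i) :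
    sInf {i | i ≤ k ∧ p i} = m ↔ m ≤ k ∧ p m ∧ ∀ j < m, ¬ p j := by
  have hne : {i | i ≤ k ∧ p i}.Nonempty := h
  constructor
  · rintro rfl
    obtain ⟨hle, hp⟩ := Nat.sInf_mem hne
    exact ⟨hle, hp, fun j hj hpj =>
      (Nat.sInf_le (show j ∈ {i | i ≤ k ∧ p i} from ⟨(hj.trans_le hle).le, hpj⟩)).not_gt hj⟩
  · rintro ⟨hle, hp, hmin⟩
    refine IsLeast.csInf_eq ⟨⟨hle, hp⟩, fun j ⟨_, hpj⟩ => ?_⟩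
    by_contra! hj
    exact hmin j hj hpj

end Nat

theorem eq_sInf_image_Iic_iff {α : Type*} [ConditionallyCompleteLattice α] (s : ℕ → α) {i k : ℕ}
    (hi : i ≤ k) :
    s i = sInf (s '' Set.Iic k) ↔ ∀ j ≤ k, s i ≤ s j := by
  have hfin := (Set.finite_Iic k).image s
  constructor
  · intro h j hj
    exact h ▸ csInf_le hfin.bddBelow (Set.mem_image_of_mem s (Set.mem_Iic.mpr hj))
  · intro h
    refine (IsLeast.csInf_eq ⟨Set.mem_image_of_mem s (Set.mem_Iic.mpr hi), ?_⟩).symm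
    rintro _ ⟨j, hj, rfl⟩
    exact h j hj

theorem eq_sSup_image_Iic_iff {α : Type*} [ConditionallyCompleteLattice α] (s : ℕ → α) {i k : ℕ}
    (hi : i ≤ k) : s i = sSup (s '' Set.Iic k) ↔ ∀ j ≤ k, s j ≤ s i :=
  eq_sInf_image_Iic_iff (α := αᵒᵈ) s hi

namespace MeasureTheory.Measure

section Exchangeable

variable {ι α β : Type*} [MeasurableSpace α] [MeasurableSpace β]

def IsExchangeable (ρ : Measure (ι → α)) : Prop :=
  ∀ π : Equiv.Perm ι, ρ.map (fun x => x ∘ π) = ρ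

theorem IsExchangeable.map_comp_perm {ρ : Measure (ι → α)} (hρ : ρ.IsExchangeable)
    (π : Equiv.Perm ι) {f : (ι → α) → β} (hf : Measurable f) :
    ρ.map (fun x => f (x ∘ π)) = ρ.map f := by
  conv_rhs => rw [← hρ π]
  rw [Measure.map_map hf (by fun_prop)]
  rfl

variable [Fintype ι]

theorem isExchangeable_pi (m : Measure α) [SigmaFinite m] :
    (Measure.pi fun _ : ι => m).IsExchangeable := by
  intro π
  convert (measurePreserving_piCongrLeft (fun _ : ι => m) π.symm).map_eq using 2
  funext x i
  simp [MeasurableEquiv.coe_piCongrLeft, Equiv.piCongrLeft_apply_eq_cast]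

theorem isExchangeable_map_of_iIndepFun {Ω : Type*} [MeasurableSpace Ω] {μ : Measure Ω}
    [IsProbabilityMeasure μ] {X : ι → Ω → α} (hX : ∀ i, Measurable (X i)) (hindep : iIndepFun X μ)
    (m : Measure α) [SigmaFinite m] (hident : ∀ i, μ.map (X i) = m) :
    (μ.map fun ω i => X i ω).IsExchangeable := by
  rw [(iIndepFun_iff_map_fun_eq_pi_map fun i => (hX i).aemeasurable).mp hindep, funext hident]
  exact isExchangeable_pi m

variable [DecidableEq ι]

theorem IsExchangeable.card_mul_lintegral_map {ρ : Measure (ι → α)} (hρ : ρ.IsExchangeable)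
    {f : (ι → α) → β} (hf : Measurable f) {φ : β → ℝ≥0∞} (hφ : Measurable φ) :
    Fintype.card (Equiv.Perm ι) * ∫⁻ b, φ b ∂(ρ.map f) =
      ∫⁻ x, ∑ π : Equiv.Perm ι, φ (f (x ∘ π)) ∂ρ := by
  have hinv (π : Equiv.Perm ι) : ∫⁻ x, φ (f (x ∘ π)) ∂ρ = ∫⁻ x, φ (f x) ∂ρ := by
    rw [← lintegral_map (f := fun x => φ (f x)) (hφ.comp hf) (by fun_prop), hρ π]
  rw [lintegral_map hφ hf, lintegral_finsetSum
    (f := fun (π : Equiv.Perm ι) (x : ι → α) => φ (f (x ∘ π))) _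
    fun π _ => (hφ.comp hf).comp (by fun_prop)]
  simp [hinv]

theorem IsExchangeable.map_eq_map {ρ : Measure (ι → α)} (hρ : ρ.IsExchangeable)
    {f g : (ι → α) → β} (hf : Measurable f) (hg : Measurable g)
    (hfg : ∀ x (φ : β → ℝ≥0∞),
      ∑ π : Equiv.Perm ι, φ (f (x ∘ π)) = ∑ π : Equiv.Perm ι, φ (g (x ∘ π))) :
    ρ.map f = ρ.map g := by
  refine Measure.ext_of_lintegral _ fun φ hφ => ?_
  have hcard : (Fintype.card (Equiv.Perm ι) : ℝ≥0∞) ≠ 0 := by simp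
  rw [← ENNReal.mul_right_inj hcard (ENNReal.natCast_ne_top _),
    hρ.card_mul_lintegral_map hf hφ, hρ.card_mul_lintegral_map hg hφ]
  simp only [hfg]

end Exchangeable

theorem map_eq_map_of_restrict_fiber {γ β : Type*} [MeasurableSpace γ] [MeasurableSpace β]
    (ν : Measure γ) {σ : γ → ℕ} (hσ : Measurable σ) {f g : γ → β}
    (hf : Measurable f) (hg : Measurable g)
    (h : ∀ k, (ν.restrict (σ ⁻¹' {k})).map f = (ν.restrict (σ ⁻¹' {k})).map g) :
    ν.map f = ν.map g := by
  have hν : ν = Measure.sum fun k => ν.restrict (σ ⁻¹' {k}) := by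
    rw [← Measure.restrict_iUnion (pairwise_disjoint_fiber σ) fun k =>
      hσ (measurableSet_singleton k), ← Set.preimage_iUnion, Set.iUnion_singleton_eq_range,
      Set.range_id', Set.preimage_univ, Measure.restrict_univ]
  rw [hν, Measure.map_sum hf.aemeasurable, Measure.map_sum hg.aemeasurable]
  simp only [h]

end MeasureTheory.Measure

noncomputable section

namespace RandomWalk

/- Statistics of a path `s` on the time interval `[0, k]`. For `s = S` they are `σ` (with `k = n`)
and, with `k = σ`, `N⁻`, `Ñ⁺`, `→F` and `←G = k - firstArgmax S k`. -/

def lastNonpos (s : ℕ → ℝ) (n : ℕ) : ℕ := sSup {i | i ≤ n ∧ s i ≤ 0}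

def nonposCount (s : ℕ → ℝ) (k : ℕ) : ℕ := ∑ i ∈ Icc 1 k, if s i ≤ 0 then 1 else 0

def countAboveLast (s : ℕ → ℝ) (k : ℕ) : ℕ := ∑ i ∈ range k, if s k ≤ s i then 1 else 0

def lastArgmin (s : ℕ → ℝ) (k : ℕ) : ℕ := sSup {i | i ≤ k ∧ s i = sInf (s '' Set.Iic k)}

def firstArgmax (s : ℕ → ℝ) (k : ℕ) : ℕ := sInf {i | i ≤ k ∧ s i = sSup (s '' Set.Iic k)}

theorem exists_argmin_Iic (s : ℕ → ℝ) (k : ℕ) : ∃ i ≤ k, ∀ j ≤ k, s i ≤ s j := by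
  obtain ⟨i, hi, hmin⟩ := Finset.exists_min_image (Finset.Iic k) s ⟨0, by simp⟩
  exact ⟨i, Finset.mem_Iic.mp hi, fun j hj => hmin j (Finset.mem_Iic.mpr hj)⟩

theorem lastArgmin_eq_iff {s : ℕ → ℝ} {k m : ℕ} : lastArgmin s k = m ↔
    m ≤ k ∧ (∀ j ≤ k, s m ≤ s j) ∧ ∀ j, m < j → j ≤ k → s m < s j := by
  obtain ⟨i, hik, hi⟩ := exists_argmin_Iic s k
  rw [lastArgmin, Nat.sSup_setOf_le_and_eq_iff ⟨i, hik, (eq_sInf_image_Iic_iff s hik).2 hi⟩]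
  refine and_congr_right fun hm => ?_
  rw [eq_sInf_image_Iic_iff s hm]
  refine and_congr_right fun hmin => forall_congr' fun j => imp_congr_right fun _ =>
    imp_congr_right fun hjk => ?_
  rw [eq_sInf_image_Iic_iff s hjk]
  exact ⟨fun h => (hmin j hjk).lt_of_ne fun he => h fun l hl => he ▸ hmin l hl,
    fun h hj => (hj m hm).not_gt h⟩

theorem firstArgmax_eq_iff {s : ℕ → ℝ} {k m : ℕ} : firstArgmax s k = m ↔
    m ≤ k ∧ (∀ j ≤ k, s j ≤ s m) ∧ ∀ j < m, s j < s m := by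
  obtain ⟨i, hik, hi⟩ := exists_argmin_Iic (fun j => - s j) k
  rw [firstArgmax, Nat.sInf_setOf_le_and_eq_iff ⟨i, hik, (eq_sSup_image_Iic_iff s hik).2
    fun j hj => neg_le_neg_iff.mp (hi j hj)⟩]
  refine and_congr_right fun hm => ?_
  rw [eq_sSup_image_Iic_iff s hm]
  refine and_congr_right fun hmax => forall_congr' fun j => imp_congr_right fun hj => ?_
  rw [eq_sSup_image_Iic_iff s (hj.le.trans hm)]
  exact ⟨fun h => (hmax j (hj.le.trans hm)).lt_of_ne fun he => h fun l hl => he ▸ hmax l hl,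
    fun h hj => (hj m hm).not_gt h⟩

theorem lastArgmin_le (s : ℕ → ℝ) (k : ℕ) : lastArgmin s k ≤ k :=
  (lastArgmin_eq_iff.mp rfl).1

theorem lastArgmin_congr {s t : ℕ → ℝ} {k : ℕ} (h : ∀ i ≤ k, s i = t i) :
    lastArgmin s k = lastArgmin t k := by
  unfold lastArgmin
  rw [Set.image_congr (s := Set.Iic k) fun i hi => h i hi]
  congr 1
  ext i
  exact and_congr_right fun hi => by rw [h i hi]

theorem lastArgmin_const_add (a : ℝ) (s : ℕ → ℝ) (k : ℕ) :
    lastArgmin (fun i => a + s i) k = lastArgmin s k := by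
  simpa [lastArgmin_eq_iff] using lastArgmin_eq_iff.mp (rfl : lastArgmin s k = _)

theorem lastArgmin_succ_of_lt {s : ℕ → ℝ} {k : ℕ} (h : s 0 < s (k + 1)) :
    lastArgmin s (k + 1) = lastArgmin s k := by
  obtain ⟨hm, hmin, hlast⟩ := lastArgmin_eq_iff.mp (rfl : lastArgmin s k = _)
  rw [lastArgmin_eq_iff]
  refine ⟨hm.trans k.le_succ, fun j hj => ?_, fun j hj hjk => ?_⟩
  · rcases hj.lt_or_eq with hj | rfl
    · exact hmin j (Nat.lt_succ_iff.mp hj)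
    · exact (hmin 0 k.zero_le).trans h.le
  · rcases hjk.lt_or_eq with hjk | rfl
    · exact hlast j hj (Nat.lt_succ_iff.mp hjk)
    · exact (hmin 0 k.zero_le).trans_lt h

theorem lastArgmin_succ_of_le {s : ℕ → ℝ} {k : ℕ} (h : s (k + 1) ≤ s 0) :
    lastArgmin s (k + 1) = lastArgmin (fun i => s (i + 1)) k + 1 := by
  obtain ⟨hm, hmin, hlast⟩ := lastArgmin_eq_iff.mp (rfl : lastArgmin (fun i => s (i + 1)) k = _)
  rw [lastArgmin_eq_iff]
  refine ⟨by omega, fun j hj => ?_, fun j hj hjk => ?_⟩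
  · rcases j with _ | j
    · exact (hmin k le_rfl).trans h
    · exact hmin j (by omega)
  · obtain ⟨j, rfl⟩ : ∃ j', j = j' + 1 := ⟨j - 1, by omega⟩
    exact hlast j (by omega) (by omega)

theorem firstArgmax_congr {s t : ℕ → ℝ} {k : ℕ} (h : ∀ i ≤ k, s i = t i) :
    firstArgmax s k = firstArgmax t k := by
  unfold firstArgmax
  rw [Set.image_congr (s := Set.Iic k) fun i hi => h i hi]
  congr 1
  ext i
  exact and_congr_right fun hi => by rw [h i hi]

theorem nonposCount_congr {s t : ℕ → ℝ} {k : ℕ} (h : ∀ i ≤ k, s i = t i) :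
    nonposCount s k = nonposCount t k :=
  Finset.sum_congr rfl fun i hi => by rw [h i (Finset.mem_Icc.mp hi).2]

theorem countAboveLast_congr {s t : ℕ → ℝ} {k : ℕ} (h : ∀ i ≤ k, s i = t i) :
    countAboveLast s k = countAboveLast t k :=
  Finset.sum_congr rfl fun i hi => by rw [h k le_rfl, h i (Finset.mem_range.mp hi).le]

theorem lastNonpos_congr {s t : ℕ → ℝ} {n : ℕ} (h : ∀ i ≤ n, s i = t i) :
    lastNonpos s n = lastNonpos t n := by
  unfold lastNonpos
  congr 1
  ext i
  exact and_congr_right fun hi => by rw [h i hi]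

theorem lastNonpos_eq_iff {s : ℕ → ℝ} (h0 : s 0 ≤ 0) {n k : ℕ} :
    lastNonpos s n = k ↔ k ≤ n ∧ s k ≤ 0 ∧ ∀ j, k < j → j ≤ n → 0 < s j := by
  simp only [lastNonpos, Nat.sSup_setOf_le_and_eq_iff (p := fun i => s i ≤ 0) ⟨0, n.zero_le, h0⟩,
    not_le]

theorem lastNonpos_le (s : ℕ → ℝ) (n : ℕ) : lastNonpos s n ≤ n :=
  csSup_le' fun _ hi => hi.1

theorem nonposCount_succ (s : ℕ → ℝ) (k : ℕ) :
    nonposCount s (k + 1) = nonposCount s k + if s (k + 1) ≤ 0 then 1 else 0 :=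
  Finset.sum_Icc_succ_top (by omega) _

theorem nonposCount_rev (s : ℕ → ℝ) (k : ℕ) :
    nonposCount (fun i => s k - s (k - i)) k = countAboveLast s k := by
  refine Finset.sum_nbij' (k - ·) (k - ·) ?_ ?_ ?_ ?_ ?_ <;> intro i hi <;> simp_all <;> omega

theorem lastArgmin_rev (s : ℕ → ℝ) (k : ℕ) :
    lastArgmin (fun i => s k - s (k - i)) k = k - firstArgmax s k := by
  obtain ⟨hm, hmax, hfirst⟩ := firstArgmax_eq_iff.mp (rfl : firstArgmax s k = _)
  rw [lastArgmin_eq_iff]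
  refine ⟨k.sub_le _, fun j hj => ?_, fun j hj hjk => ?_⟩
  · rw [show k - (k - firstArgmax s k) = firstArgmax s k by omega]
    linarith [hmax (k - j) (k.sub_le j)]
  · rw [show k - (k - firstArgmax s k) = firstArgmax s k by omega]
    linarith [hfirst (k - j) (by omega)]

theorem measurable_nonposCount (k : ℕ) : Measurable fun s : ℕ → ℝ => nonposCount s k :=
  Finset.measurable_sum _ fun i _ =>
    Measurable.ite (measurableSet_le (measurable_pi_apply i) measurable_const)
      measurable_const measurable_const

theorem measurable_countAboveLast (k : ℕ) : Measurable fun s : ℕ → ℝ => countAboveLast s k :=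
  Finset.measurable_sum _ fun i _ =>
    Measurable.ite (measurableSet_le (measurable_pi_apply k) (measurable_pi_apply i))
      measurable_const measurable_const

theorem measurable_lastArgmin (k : ℕ) : Measurable fun s : ℕ → ℝ => lastArgmin s k :=
  measurable_to_countable' fun m => by
    simp only [Set.preimage, Set.mem_singleton_iff, lastArgmin_eq_iff]
    exact measurableSet_setOfPred.mpr (by fun_prop)

theorem measurable_firstArgmax (k : ℕ) : Measurable fun s : ℕ → ℝ => firstArgmax s k :=
  measurable_to_countable' fun m => by
    simp only [Set.preimage, Set.mem_singleton_iff, firstArgmax_eq_iff]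
    exact measurableSet_setOfPred.mpr (by fun_prop)

-- `walk y i = y 0 + ⋯ + y (i - 1)`, the walk `S_i` with increments `y`.
def walk {k : ℕ} (y : Fin k → ℝ) (i : ℕ) : ℝ := ∑ j : Fin k with j.val < i, y j

section Walk

variable {k : ℕ}

@[simp] theorem walk_zero (y : Fin k → ℝ) : walk y 0 = 0 := by simp [walk]

theorem walk_of_le (y : Fin k → ℝ) {i : ℕ} (hi : k ≤ i) : walk y i = ∑ j, y j := by
  rw [walk, Finset.filter_true_of_mem fun j _ => j.2.trans_le hi]

theorem walk_cons (a : ℝ) (w : Fin k → ℝ) (i : ℕ) :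
    walk (Fin.cons a w : Fin (k + 1) → ℝ) (i + 1) = a + walk w i := by
  simp [walk, Finset.sum_filter, Fin.sum_univ_succ]

theorem walk_snoc (w : Fin k → ℝ) (a : ℝ) {i : ℕ} (hi : i ≤ k) :
    walk (Fin.snoc w a : Fin (k + 1) → ℝ) i = walk w i := by
  simp [walk, Finset.sum_filter, Fin.sum_univ_castSucc]
  omega

theorem walk_comp_perm (y : Fin k → ℝ) (π : Equiv.Perm (Fin k)) {i : ℕ} (hi : k ≤ i) :
    walk (y ∘ π) i = walk y i := by
  rw [walk_of_le _ hi, walk_of_le _ hi]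
  exact Equiv.sum_comp π y

theorem walk_comp_rev (y : Fin k → ℝ) :
    walk (y ∘ Fin.rev) = fun i => walk y k - walk y (k - i) := by
  funext i
  have hrev : walk (y ∘ Fin.rev) i = ∑ j : Fin k with ¬ j.val < k - i, y j :=
    Finset.sum_equiv Fin.revPerm (fun j => by simp [Fin.val_rev]; omega) (by simp)
  rw [hrev, walk_of_le y le_rfl, walk, ← Finset.sum_filter_add_sum_filter_not univ
    (fun j : Fin k => j.val < k - i)]
  ring

theorem walk_snoc_succ (w : Fin k → ℝ) (a : ℝ) :
    walk (Fin.snoc w a : Fin (k + 1) → ℝ) (k + 1) = walk w k + a := by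
  rw [walk_of_le _ le_rfl, walk_of_le _ le_rfl, Fin.sum_snoc]

theorem nonposCount_walk_snoc (w : Fin k → ℝ) (a : ℝ) :
    nonposCount (walk (Fin.snoc w a : Fin (k + 1) → ℝ)) (k + 1) =
      nonposCount (walk w) k + if walk w k + a ≤ 0 then 1 else 0 := by
  rw [nonposCount_succ, walk_snoc_succ, nonposCount_congr fun i hi => walk_snoc w a hi]

theorem lastArgmin_walk_snoc (w : Fin k → ℝ) {a : ℝ} (h : 0 < walk w k + a) :
    lastArgmin (walk (Fin.snoc w a : Fin (k + 1) → ℝ)) (k + 1) = lastArgmin (walk w) k := by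
  rw [lastArgmin_succ_of_lt (by rwa [walk_snoc_succ, walk_zero]),
    lastArgmin_congr fun i hi => walk_snoc w a hi]

theorem lastArgmin_walk_cons {a : ℝ} (w : Fin k → ℝ) (h : a + walk w k ≤ 0) :
    lastArgmin (walk (Fin.cons a w : Fin (k + 1) → ℝ)) (k + 1) = lastArgmin (walk w) k + 1 := by
  rw [lastArgmin_succ_of_le (by rwa [walk_cons, walk_zero])]
  simp only [walk_cons, lastArgmin_const_add]

theorem nonposCount_walk_comp_rev (y : Fin k → ℝ) :
    nonposCount (walk (y ∘ Fin.rev)) k = countAboveLast (walk y) k := by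
  rw [walk_comp_rev, nonposCount_rev]

theorem lastArgmin_walk_comp_rev (y : Fin k → ℝ) :
    lastArgmin (walk (y ∘ Fin.rev)) k = k - firstArgmax (walk y) k := by
  rw [walk_comp_rev, lastArgmin_rev]

@[fun_prop]
theorem measurable_walk : Measurable (walk : (Fin k → ℝ) → ℕ → ℝ) := by
  unfold walk
  fun_prop

end Walk

section Combinatorics

open Equiv

variable {α M : Type*} [AddCommMonoid M] {k : ℕ}

theorem sum_perm_eq_sum_cons (y : Fin (k + 1) → α) (g : (Fin (k + 1) → α) → M) :
    ∑ π : Perm (Fin (k + 1)), g (y ∘ π) =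
      ∑ p, ∑ e : Perm (Fin k), g (Fin.cons (y p) (Fin.tail (y ∘ swap 0 p) ∘ e)) := by
  rw [← Perm.decomposeFin.symm.sum_comp, Fintype.sum_prod_type]
  refine Finset.sum_congr rfl fun p _ => Finset.sum_congr rfl fun e _ => congrArg g ?_
  funext i
  cases i using Fin.cases <;>
    simp [Perm.decomposeFin_symm_apply_zero, Perm.decomposeFin_symm_apply_succ, Fin.tail]

theorem sum_perm_comp_rev (y : Fin k → α) (g : (Fin k → α) → M) :
    ∑ π : Perm (Fin k), g (y ∘ π ∘ Fin.rev) = ∑ π : Perm (Fin k), g (y ∘ π) :=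
  Equiv.sum_comp (Equiv.mulRight Fin.revPerm) fun π => g (y ∘ π)

theorem sum_perm_eq_sum_snoc (y : Fin (k + 1) → α) (g : (Fin (k + 1) → α) → M) :
    ∑ π : Perm (Fin (k + 1)), g (y ∘ π) =
      ∑ p, ∑ e : Perm (Fin k), g (Fin.snoc (Fin.tail (y ∘ swap 0 p) ∘ e) (y p)) := by
  refine (sum_perm_comp_rev y g).symm.trans <|
    (sum_perm_eq_sum_cons y fun x => g (x ∘ Fin.rev)).trans <| Finset.sum_congr rfl fun p _ => ?_
  rw [← sum_perm_comp_rev _ fun x => g (Fin.snoc x (y p))]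
  simp only [Fin.cons_comp_rev, Function.comp_assoc]

/- Induction on `k`, splitting off one increment `a`. If the total is `≤ 0`, appending `a` last adds
one to `N⁻` and prepending it first adds one to `→F`; otherwise appending it changes neither. -/
theorem sum_perm_nonposCount_eq_sum_perm_lastArgmin :
    ∀ {k : ℕ} (y : Fin k → ℝ) (φ : ℕ → M), ∑ π : Perm (Fin k), φ (nonposCount (walk (y ∘ π)) k) =
      ∑ π : Perm (Fin k), φ (lastArgmin (walk (y ∘ π)) k)
  | 0, y, φ => by simp [nonposCount, Nat.le_zero.mp (lastArgmin_le _ 0)]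
  | k + 1, y, φ => by
    have htotal (p : Fin (k + 1)) (e : Perm (Fin k)) :
        walk (Fin.tail (y ∘ swap 0 p) ∘ e) k + y p = walk y (k + 1) := by
      rw [walk_comp_perm _ _ le_rfl, walk_of_le _ le_rfl, walk_of_le _ le_rfl,
        ← Equiv.sum_comp (swap 0 p) y, Fin.sum_univ_succ]
      simp [Fin.tail, add_comm]
    have ih (p : Fin (k + 1)) :=
      sum_perm_nonposCount_eq_sum_perm_lastArgmin (Fin.tail (y ∘ swap 0 p))
    rw [sum_perm_eq_sum_snoc y fun x => φ (nonposCount (walk x) (k + 1))]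
    by_cases hT : walk y (k + 1) ≤ 0
    · rw [sum_perm_eq_sum_cons y fun x => φ (lastArgmin (walk x) (k + 1))]
      refine Finset.sum_congr rfl fun p _ => ?_
      have hcons (e : Perm (Fin k)) : y p + walk (Fin.tail (y ∘ swap 0 p) ∘ e) k ≤ 0 := by
        linarith [htotal p e]
      simp only [nonposCount_walk_snoc, htotal, if_pos hT, lastArgmin_walk_cons _ (hcons _)]
      exact ih p fun c => φ (c + 1)
    · rw [sum_perm_eq_sum_snoc y fun x => φ (lastArgmin (walk x) (k + 1))]
      refine Finset.sum_congr rfl fun p _ => ?_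
      have hsnoc (e : Perm (Fin k)) : 0 < walk (Fin.tail (y ∘ swap 0 p) ∘ e) k + y p := by
        linarith [htotal p e]
      simp only [nonposCount_walk_snoc, htotal, if_neg hT, add_zero,
        lastArgmin_walk_snoc _ (hsnoc _)]
      exact ih p φ

end Combinatorics

section FixedHorizon

variable {k : ℕ} {ρ : Measure (Fin k → ℝ)}

theorem map_countAboveLast_eq_map_nonposCount (hρ : ρ.IsExchangeable) :
    ρ.map (fun y => countAboveLast (walk y) k) = ρ.map fun y => nonposCount (walk y) k := by
  simp_rw [← nonposCount_walk_comp_rev]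
  exact hρ.map_comp_perm Fin.revPerm ((measurable_nonposCount k).comp measurable_walk)

theorem map_lastArgmin_eq_map_nonposCount (hρ : ρ.IsExchangeable) :
    ρ.map (fun y => lastArgmin (walk y) k) = ρ.map fun y => nonposCount (walk y) k :=
  hρ.map_eq_map ((measurable_lastArgmin k).comp measurable_walk)
    ((measurable_nonposCount k).comp measurable_walk) fun y φ =>
      (sum_perm_nonposCount_eq_sum_perm_lastArgmin y φ).symm

theorem map_sub_firstArgmax_eq_map_nonposCount (hρ : ρ.IsExchangeable) :
    ρ.map (fun y => k - firstArgmax (walk y) k) = ρ.map fun y => nonposCount (walk y) k := by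
  simp_rw [← lastArgmin_walk_comp_rev]
  exact (hρ.map_comp_perm Fin.revPerm ((measurable_lastArgmin k).comp measurable_walk)).trans
    (map_lastArgmin_eq_map_nonposCount hρ)

end FixedHorizon

section Horizon

open Equiv

variable {n : ℕ}

theorem walk_comp_castLE (x : Fin n → ℝ) {k : ℕ} (hk : k ≤ n) {i : ℕ} (hi : i ≤ k) :
    walk (x ∘ Fin.castLE hk) i = walk x i := by
  refine Finset.sum_bij (fun j _ => Fin.castLE hk j) (by simp)
    (fun _ _ _ _ h => Fin.castLE_injective hk h)
    (fun j hj => ⟨⟨j, by simp at hj; omega⟩, by simpa using hj, rfl⟩) (fun _ _ => rfl)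

theorem walk_eq_sum_range (z : ℕ → ℝ) {i : ℕ} (hi : i ≤ n) :
    walk (fun j : Fin n => z j) i = ∑ j ∈ range i, z j := by
  rw [walk, Finset.sum_filter, Fin.sum_univ_eq_sum_range (fun j => if j < i then z j else 0),
    ← Finset.sum_filter]
  congr 1
  ext j
  simp only [Finset.mem_filter, Finset.mem_range]
  omega

theorem exists_perm_extend {k : ℕ} (hk : k ≤ n) (π : Perm (Fin k)) :
    ∃ τ : Perm (Fin n), (∀ x : Fin n → ℝ, (x ∘ τ) ∘ Fin.castLE hk = (x ∘ Fin.castLE hk) ∘ π) ∧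
      ∀ (x : Fin n → ℝ) (i : ℕ), k ≤ i → walk (x ∘ τ) i = walk x i := by
  refine ⟨π.viaFintypeEmbedding (Fin.castLEEmb hk), fun x => funext fun j => ?_, fun x i hi => ?_⟩
  · simpa using congrArg x (π.viaFintypeEmbedding_apply_image (Fin.castLEEmb hk) j)
  · refine Finset.sum_equiv (π.viaFintypeEmbedding (Fin.castLEEmb hk)) (fun j => ?_) fun _ _ => rfl
    by_cases hj : j.val < k
    · have := π.viaFintypeEmbedding_apply_image (Fin.castLEEmb hk) ⟨j, hj⟩
      simp only [Fin.castLEEmb_apply, Fin.castLE_mk] at this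
      simp only [Finset.mem_filter, Finset.mem_univ, true_and, this, Fin.val_castLE]
      exact iff_of_true (by omega) (by omega)
    · rw [Equiv.Perm.viaFintypeEmbedding_apply_notMem_range (e := π) (f := Fin.castLEEmb hk)
        (by simpa using hj)]

structure IsPrefixStatistic (Φ : (ℕ → ℝ) → ℕ → ℕ) : Prop where
  congr : ∀ ⦃s t : ℕ → ℝ⦄ ⦃k : ℕ⦄, (∀ i ≤ k, s i = t i) → Φ s k = Φ t k
  measurable : ∀ k, Measurable fun s => Φ s k

theorem isPrefixStatistic_nonposCount : IsPrefixStatistic nonposCount :=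
  ⟨fun _ _ _ h => nonposCount_congr h, measurable_nonposCount⟩

theorem isPrefixStatistic_countAboveLast : IsPrefixStatistic countAboveLast :=
  ⟨fun _ _ _ h => countAboveLast_congr h, measurable_countAboveLast⟩

theorem isPrefixStatistic_lastArgmin : IsPrefixStatistic lastArgmin :=
  ⟨fun _ _ _ h => lastArgmin_congr h, measurable_lastArgmin⟩

theorem isPrefixStatistic_sub_firstArgmax : IsPrefixStatistic fun s k => k - firstArgmax s k :=
  ⟨fun _ _ _ h => by rw [firstArgmax_congr h], fun k =>
    (measurable_from_top (f := fun m : ℕ => k - m)).comp (measurable_firstArgmax k)⟩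

def atLastNonpos (Φ : (ℕ → ℝ) → ℕ → ℕ) (x : Fin n → ℝ) : ℕ :=
  Φ (walk x) (lastNonpos (walk x) n)

theorem measurable_lastNonpos_walk : Measurable fun x : Fin n → ℝ => lastNonpos (walk x) n :=
  measurable_to_countable' fun k => by
    simp only [Set.preimage, Set.mem_singleton_iff, lastNonpos_eq_iff (walk_zero _).le]
    exact measurableSet_setOfPred.mpr (by fun_prop)

theorem IsPrefixStatistic.measurable_atLastNonpos {Φ : (ℕ → ℝ) → ℕ → ℕ}
    (hΦ : IsPrefixStatistic Φ) : Measurable (atLastNonpos (n := n) Φ) :=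
  (measurable_from_prod_countable_left (f := fun p : (ℕ → ℝ) × ℕ => Φ p.1 p.2)
    hΦ.measurable).comp (measurable_walk.prodMk measurable_lastNonpos_walk)

theorem IsPrefixStatistic.atLastNonpos_eq {Φ : (ℕ → ℝ) → ℕ → ℕ} (hΦ : IsPrefixStatistic Φ)
    {x : Fin n → ℝ} {k : ℕ} (hk : k ≤ n) (hx : lastNonpos (walk x) n = k) :
    atLastNonpos Φ x = Φ (walk (x ∘ Fin.castLE hk)) k := by
  rw [atLastNonpos, hx]
  exact hΦ.congr fun i hi => (walk_comp_castLE x hk hi).symm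

theorem IsPrefixStatistic.apply_lastNonpos {Φ : (ℕ → ℝ) → ℕ → ℕ} (hΦ : IsPrefixStatistic Φ)
    {s : ℕ → ℝ} {x : Fin n → ℝ} (h : ∀ i ≤ n, s i = walk x i) :
    Φ s (lastNonpos s n) = atLastNonpos Φ x := by
  rw [atLastNonpos, lastNonpos_congr h]
  exact hΦ.congr fun i hi => h i (hi.trans (lastNonpos_le _ _))

-- A permutation of the first `k` increments fixes `S_i` for `i ≥ k`, hence the event `{σ = k}`.
theorem isExchangeable_map_restrict_lastNonpos {ν : Measure (Fin n → ℝ)} (hν : ν.IsExchangeable)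
    {k : ℕ} (hk : k ≤ n) :
    ((ν.restrict ((fun x => lastNonpos (walk x) n) ⁻¹' {k})).map
      (fun x => x ∘ Fin.castLE hk)).IsExchangeable := by
  intro π
  obtain ⟨τ, hres, hwalk⟩ := exists_perm_extend hk π
  set E := (fun x : Fin n → ℝ => lastNonpos (walk x) n) ⁻¹' {k}
  have hE : MeasurableSet E := measurable_lastNonpos_walk (measurableSet_singleton k)
  have hτE : (fun x => x ∘ τ) ⁻¹' E = E := by
    ext x
    simp only [E, Set.mem_preimage, Set.mem_singleton_iff]
    rw [lastNonpos_eq_iff (walk_zero _).le, lastNonpos_eq_iff (walk_zero _).le, hwalk x k le_rfl]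
    exact and_congr_right fun _ => and_congr_right fun _ => forall_congr' fun j =>
      imp_congr_right fun hj => by rw [hwalk x j hj.le]
  have hνE : (ν.restrict E).map (fun x => x ∘ τ) = ν.restrict E := by
    conv_lhs => rw [← hτE]
    rw [← Measure.restrict_map (by fun_prop) hE, hν τ]
  calc ((ν.restrict E).map fun x => x ∘ Fin.castLE hk).map (fun y => y ∘ π)
      = ((ν.restrict E).map fun x => x ∘ τ).map fun x => x ∘ Fin.castLE hk := by
        rw [Measure.map_map (by fun_prop) (by fun_prop), Measure.map_map (by fun_prop)
          (by fun_prop)]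
        exact congrArg (Measure.map · _) (funext fun x => (hres x).symm)
    _ = (ν.restrict E).map fun x => x ∘ Fin.castLE hk := by rw [hνE]

theorem IsPrefixStatistic.map_restrict_atLastNonpos {Φ : (ℕ → ℝ) → ℕ → ℕ}
    (hΦ : IsPrefixStatistic Φ) (ν : Measure (Fin n → ℝ)) {k : ℕ} (hk : k ≤ n) :
    (ν.restrict ((fun x => lastNonpos (walk x) n) ⁻¹' {k})).map (atLastNonpos Φ) =
      ((ν.restrict ((fun x => lastNonpos (walk x) n) ⁻¹' {k})).map
        (fun x => x ∘ Fin.castLE hk)).map fun y => Φ (walk y) k := by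
  have hm : Measurable fun y : Fin k → ℝ => Φ (walk y) k := (hΦ.measurable k).comp measurable_walk
  rw [Measure.map_map hm (by fun_prop)]
  exact Measure.map_congr (ae_restrict_of_forall_mem
    (measurable_lastNonpos_walk (measurableSet_singleton k)) fun x hx => hΦ.atLastNonpos_eq hk hx)

theorem map_atLastNonpos_eq {Φ Ψ : (ℕ → ℝ) → ℕ → ℕ} (hΦ : IsPrefixStatistic Φ)
    (hΨ : IsPrefixStatistic Ψ)
    (h : ∀ k ≤ n, ∀ ρ : Measure (Fin k → ℝ), ρ.IsExchangeable →
      ρ.map (fun y => Φ (walk y) k) = ρ.map fun y => Ψ (walk y) k)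
    {ν : Measure (Fin n → ℝ)} (hν : ν.IsExchangeable) :
    ν.map (atLastNonpos Φ) = ν.map (atLastNonpos Ψ) := by
  refine ν.map_eq_map_of_restrict_fiber measurable_lastNonpos_walk hΦ.measurable_atLastNonpos
    hΨ.measurable_atLastNonpos fun k => ?_
  by_cases hk : k ≤ n
  · rw [hΦ.map_restrict_atLastNonpos ν hk, hΨ.map_restrict_atLastNonpos ν hk]
    exact h k hk _ (isExchangeable_map_restrict_lastNonpos hν hk)
  · have : (fun x : Fin n → ℝ => lastNonpos (walk x) n) ⁻¹' {k} = ∅ :=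
      Set.eq_empty_of_forall_notMem fun x hx => hk (hx ▸ lastNonpos_le _ _)
    simp [this]

end Horizon

end RandomWalk

end

open RandomWalk in
/-- The four random variables N⁻, Ñ⁺, →F and ←G all have the same distribution. -/
theorem stmt_9 {Ω : Type*} [MeasurableSpace Ω] (μ : Measure Ω) [IsProbabilityMeasure μ]
    (n : ℕ) (ζ : ℕ → Ω → ℝ)
    (hmeas : ∀ i, Measurable (ζ i))
    (hindep : ProbabilityTheory.iIndepFun ζ μ)
    (hident : ∀ i, μ.map (ζ i) = μ.map (ζ 0))
    (S : ℕ → Ω → ℝ) (hS : ∀ i ω, S i ω = ∑ j ∈ Finset.range i, ζ j ω)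
    (σ : Ω → ℕ) (hσ : ∀ ω, σ ω = sSup {i | i ≤ n ∧ S i ω ≤ 0})
    (Nminus Ntildeplus F G' : Ω → ℕ)
    (hNminus : ∀ ω, Nminus ω = ∑ i ∈ Finset.Icc 1 (σ ω), if S i ω ≤ 0 then 1 else 0)
    (hNtildeplus : ∀ ω, Ntildeplus ω =
      ∑ i ∈ Finset.range (σ ω), if S (σ ω) ω ≤ S i ω then 1 else 0)
    (hF : ∀ ω, F ω = sSup {i | i ≤ σ ω ∧ S i ω = sInf ((fun j => S j ω) '' Set.Iic (σ ω))})
    (hG' : ∀ ω, G' ω =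
      σ ω - sInf {i | i ≤ σ ω ∧ S i ω = sSup ((fun j => S j ω) '' Set.Iic (σ ω))}) :
    μ.map Nminus = μ.map Ntildeplus ∧ μ.map Nminus = μ.map F ∧ μ.map Nminus = μ.map G' := by
  set V : Ω → Fin n → ℝ := fun ω i => ζ i ω
  have hV : Measurable V := measurable_pi_lambda _ fun i => hmeas i
  have := Measure.isProbabilityMeasure_map (μ := μ) (hmeas 0).aemeasurable
  have hν : (μ.map V).IsExchangeable := Measure.isExchangeable_map_of_iIndepFun
    (fun i => hmeas i) (hindep.precomp Fin.val_injective) _ fun i => hident i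
  have hlaw {Φ : (ℕ → ℝ) → ℕ → ℕ} (hΦ : IsPrefixStatistic Φ) {X : Ω → ℕ}
      (hX : ∀ ω, X ω = Φ (fun i => S i ω) (σ ω)) : μ.map X = (μ.map V).map (atLastNonpos Φ) := by
    rw [Measure.map_map hΦ.measurable_atLastNonpos hV]
    refine congrArg (Measure.map · μ) (funext fun ω => ?_)
    rw [hX, hσ]
    exact hΦ.apply_lastNonpos fun i hi => by rw [hS, walk_eq_sum_range (fun j => ζ j ω) hi]
  rw [hlaw isPrefixStatistic_nonposCount hNminus, hlaw isPrefixStatistic_countAboveLast hNtildeplus,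
    hlaw isPrefixStatistic_lastArgmin hF, hlaw isPrefixStatistic_sub_firstArgmax hG']
  exact ⟨map_atLastNonpos_eq isPrefixStatistic_nonposCount isPrefixStatistic_countAboveLast
      (fun _ _ _ hρ => (map_countAboveLast_eq_map_nonposCount hρ).symm) hν,
    map_atLastNonpos_eq isPrefixStatistic_nonposCount isPrefixStatistic_lastArgmin
      (fun _ _ _ hρ => (map_lastArgmin_eq_map_nonposCount hρ).symm) hν,
    map_atLastNonpos_eq isPrefixStatistic_nonposCount isPrefixStatistic_sub_firstArgmax
      (fun _ _ _ hρ => (map_sub_firstArgmax_eq_map_nonposCount hρ).symm) hν⟩
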